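/- Let H be a Hilbert space and B : H → H a self-adjoint bounded linear operator with 0 ≤ B ≤ I. Then B is non-expansive and asymptotically regular, and consequently for every x ∈ H the powers B^{k}x converge in norm, as k → ∞, to Πx, where Π is the orthogonal projection onto ker(I − B). -/

import Mathlib

/-!
Write `q k = re ⟪B^k x, x⟫`. Since `0 ≤ B ≤ 1`, the operator `c = B^k - B^(k+1)` satisfies
`0 ≤ c ≤ 1`, hence `c^2 ≤ c`, i.e. `‖B^k x - B^(k+1) x‖^2 ≤ q k - q (k+1)`; as `q` is a decreasing
sequence of nonnegative reals, these differences tend to zero. Consequently `B^k` tends to zero on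
`range (1 - B)`, hence, the `B^k` being contractions, on its closure `ker (1 - B)ᗮ`, while it is the
identity on `ker (1 - B)`.
-/

open Filter Topology

namespace CStarAlgebra

variable {A : Type*} [CStarAlgebra A] [PartialOrder A] [StarOrderedRing A] {a : A}

lemma sq_le_self_of_nonneg_of_le_one (h0 : 0 ≤ a) (h1 : a ≤ 1) : a ^ 2 ≤ a := by
  simpa using pow_antitone h0 h1 one_le_two

lemma pow_sub_pow_succ_nonneg (h0 : 0 ≤ a) (h1 : a ≤ 1) (k : ℕ) : 0 ≤ a ^ k - a ^ (k + 1) :=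
  sub_nonneg.2 (pow_antitone h0 h1 k.le_succ)

lemma pow_sub_pow_succ_le_one (h0 : 0 ≤ a) (h1 : a ≤ 1) (k : ℕ) : a ^ k - a ^ (k + 1) ≤ 1 :=
  calc a ^ k - a ^ (k + 1) ≤ a ^ k := sub_le_self _ (pow_nonneg h0 _)
    _ ≤ a ^ 0 := pow_antitone h0 h1 k.zero_le
    _ = 1 := pow_zero a

end CStarAlgebra

namespace ContinuousLinearMap

section

variable {𝕜 E : Type*} [RCLike 𝕜] [NormedAddCommGroup E] [InnerProductSpace 𝕜 E]

lemma reApplyInnerSelf_mono {S T : E →L[𝕜] E} (h : S ≤ T) (x : E) :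
    S.reApplyInnerSelf x ≤ T.reApplyInnerSelf x := by
  simpa only [reApplyInnerSelf_apply, sub_apply, inner_sub_left, map_sub, sub_nonneg] using
    ((le_def S T).1 h).re_inner_nonneg_left x

lemma norm_apply_sq_le_reApplyInnerSelf [CompleteSpace E] {T : E →L[𝕜] E} (hT : IsSelfAdjoint T)
    (h : T ^ 2 ≤ T) (x : E) : ‖T x‖ ^ 2 ≤ T.reApplyInnerSelf x := by
  have hsq : (T ^ 2).reApplyInnerSelf x = ‖T x‖ ^ 2 := by
    rw [reApplyInnerSelf_apply, sq, mul_apply_eq_comp, ← adjoint_inner_right, hT.adjoint_eq,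
      inner_self_eq_norm_sq]
  exact hsq ▸ reApplyInnerSelf_mono h x

lemma pow_apply_eq_self_of_mem_ker_one_sub {T : E →L[𝕜] E} {y : E}
    (hy : y ∈ LinearMap.ker ((1 - T : E →L[𝕜] E) : E →ₗ[𝕜] E)) (k : ℕ) : (T ^ k) y = y := by
  have hfix : Function.IsFixedPt T y := by
    have : y - T y = 0 := by simpa using hy
    exact (sub_eq_zero.1 this).symm
  rw [FunLike.coe_pow_eq_iterate]
  exact hfix.iterate k

lemma isClosed_setOf_tendsto_pow_apply_zero {T : E →L[𝕜] E} (hT : ‖T‖ ≤ 1) :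
    IsClosed {v | Tendsto (fun k : ℕ => (T ^ k) v) atTop (𝓝 0)} := by
  have hbound : ∃ C, ∀ (k : ℕ) (v : E), ‖(T ^ k) v‖ ≤ C * ‖v‖ :=
    ⟨1, fun k v => by
      simpa [FunLike.coe_pow_eq_iterate] using
        ((T.lipschitz.weaken hT : LipschitzWith 1 T).iterate k).dist_le_mul v 0⟩
  have hequi : Equicontinuous fun k : ℕ => ⇑(T ^ k) :=
    ((NormedSpace.equicontinuous_TFAE fun k : ℕ => T ^ k).out 3 1).1 hbound
  exact hequi.isClosed_setOfPred_tendsto continuous_const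

variable [CompleteSpace E]

theorem tendsto_pow_apply_orthogonalProjectionOnto_ker_one_sub {T : E →L[𝕜] E}
    (hT : IsSelfAdjoint T) (hnorm : ‖T‖ ≤ 1)
    (hreg : ∀ y, Tendsto (fun k : ℕ => ‖(T ^ (k + 1)) y - (T ^ k) y‖) atTop (𝓝 0)) (x : E) :
    Tendsto (fun k : ℕ => (T ^ k) x) atTop
      (𝓝 ((LinearMap.ker ((1 - T : E →L[𝕜] E) : E →ₗ[𝕜] E)).orthogonalProjectionOnto x : E)) := by
  set K := LinearMap.ker ((1 - T : E →L[𝕜] E) : E →ₗ[𝕜] E)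
  set p : E := (K.orthogonalProjectionOnto x : E)
  have hrange : ∀ y, Tendsto (fun k : ℕ => (T ^ k) ((1 - T) y)) atTop (𝓝 0) := fun y => by
    rw [tendsto_zero_iff_norm_tendsto_zero]
    simpa [norm_sub_rev, pow_succ, mul_apply_eq_comp] using hreg y
  have hdense : Kᗮ = (1 - T).range.topologicalClosure := by
    rw [← ((IsSelfAdjoint.one _).sub hT).adjoint_eq, ← orthogonal_ker]
  have hperp : Tendsto (fun k : ℕ => (T ^ k) (x - p)) atTop (𝓝 0) := by
    refine closure_minimal (Set.forall_mem_range.2 hrange)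
      (isClosed_setOf_tendsto_pow_apply_zero hnorm) ?_
    change x - p ∈ closure ((1 - T).range : Set E)
    rw [← Submodule.topologicalClosure_coe, ← hdense]
    exact K.sub_starProjection_mem_orthogonal x
  have hfix := pow_apply_eq_self_of_mem_ker_one_sub (K.orthogonalProjectionOnto x).2
  simpa only [p, map_sub, hfix, sub_add_cancel, zero_add] using hperp.add_const p

end

variable {H : Type*} [NormedAddCommGroup H] [InnerProductSpace ℂ H] [CompleteSpace H]

theorem tendsto_norm_pow_succ_apply_sub_pow_apply_of_nonneg_of_le_one {B : H →L[ℂ] H}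
    (h0 : 0 ≤ B) (h1 : B ≤ 1) (x : H) :
    Tendsto (fun k : ℕ => ‖(B ^ (k + 1)) x - (B ^ k) x‖) atTop (𝓝 0) := by
  set q : ℕ → ℝ := fun k => (B ^ k).reApplyInnerSelf x
  have hq_anti : Antitone q := fun m n hmn =>
    reApplyInnerSelf_mono (CStarAlgebra.pow_antitone h0 h1 hmn) x
  have hq_nonneg : ∀ k, 0 ≤ q k := fun k =>
    ((nonneg_iff_isPositive _).1 (CStarAlgebra.pow_nonneg h0 k)).2 x
  have hq_lim := tendsto_atTop_ciInf hq_anti ⟨0, Set.forall_mem_range.2 hq_nonneg⟩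
  have hq_diff : Tendsto (fun k => q k - q (k + 1)) atTop (𝓝 0) := by
    simpa using hq_lim.sub (hq_lim.comp (tendsto_add_atTop_nat 1))
  have hbound : ∀ k, ‖(B ^ (k + 1)) x - (B ^ k) x‖ ^ 2 ≤ q k - q (k + 1) := fun k => by
    have hc0 := CStarAlgebra.pow_sub_pow_succ_nonneg h0 h1 k
    have hc := norm_apply_sq_le_reApplyInnerSelf (IsSelfAdjoint.of_nonneg hc0)
      (CStarAlgebra.sq_le_self_of_nonneg_of_le_one hc0
        (CStarAlgebra.pow_sub_pow_succ_le_one h0 h1 k)) x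
    simpa only [q, norm_sub_rev, sub_apply, reApplyInnerSelf_apply, inner_sub_left, map_sub] using hc
  refine squeeze_zero (fun _ => norm_nonneg _) (fun k => ?_) (by simpa using hq_diff.sqrt)
  simpa using Real.abs_le_sqrt (hbound k)

end ContinuousLinearMap

theorem powers_tendsto_orthogonalProjection_of_isPositive_le_one_general
    {H : Type*} [NormedAddCommGroup H] [InnerProductSpace ℂ H] [CompleteSpace H]
    (B : H →L[ℂ] H)
    (hpos : B.IsPositive) (hle : ((1 : H →L[ℂ] H) - B).IsPositive) :
    ‖B‖ ≤ 1 ∧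
    (∀ x : H, Tendsto (fun k : ℕ => ‖(B ^ (k + 1)) x - (B ^ k) x‖) atTop (𝓝 0)) ∧
    (∀ x : H, Tendsto (fun k : ℕ => (B ^ k) x) atTop
      (𝓝 ((Submodule.orthogonalProjectionOnto (LinearMap.ker (((1 : H →L[ℂ] H) - B : H →L[ℂ] H) : H →ₗ[ℂ] H)) x : H)))) := by
  have h0 : 0 ≤ B := (ContinuousLinearMap.nonneg_iff_isPositive B).2 hpos
  have h1 : B ≤ 1 := hle
  have hnorm : ‖B‖ ≤ 1 := (CStarAlgebra.norm_le_one_iff_of_nonneg B h0).2 h1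
  have hreg := ContinuousLinearMap.tendsto_norm_pow_succ_apply_sub_pow_apply_of_nonneg_of_le_one h0 h1
  exact ⟨hnorm, hreg, ContinuousLinearMap.tendsto_pow_apply_orthogonalProjectionOnto_ker_one_sub
    hpos.isSelfAdjoint hnorm hreg⟩

/-- If `B` is a self-adjoint bounded linear operator on a complex
Hilbert space with `0 ≤ B ≤ I`, then `B` is non-expansive and asymptotically
regular, and for every `x` the powers `B^k x` converge in norm to `Π x`, where
`Π` is the orthogonal projection onto `ker (I - B)`. -/
theorem powers_tendsto_orthogonalProjection_of_isPositive_le_one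
    {H : Type*} [NormedAddCommGroup H] [InnerProductSpace ℂ H] [CompleteSpace H]
    (B : H →L[ℂ] H) (hB : IsSelfAdjoint B)
    (hpos : B.IsPositive) (hle : ((1 : H →L[ℂ] H) - B).IsPositive) :
    ‖B‖ ≤ 1 ∧
    (∀ x : H, Tendsto (fun k : ℕ => ‖(B ^ (k + 1)) x - (B ^ k) x‖) atTop (𝓝 0)) ∧
    (∀ x : H, Tendsto (fun k : ℕ => (B ^ k) x) atTop
      (𝓝 ((Submodule.orthogonalProjectionOnto (LinearMap.ker (((1 : H →L[ℂ] H) - B : H →L[ℂ] H) : H →ₗ[ℂ] H)) x : H)))) :=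
  powers_tendsto_orthogonalProjection_of_isPositive_le_one_general B hpos hle
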